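/- arXiv:1911.08189 — 2 statements merged into one kernel-verified Lean document; each statement's English description precedes it below -/
import Mathlib

section
/- Let P be an L-convex polyomino. If two columns j and j' of P satisfy v_j ≤ v_{j'} (where v_j is the number of cells in column j), then every row that contains a cell of column j of P also contains a cell of column j' of P. The analogous statement holds for rows. -/
/-- Two cells of `ℤ × ℤ` are adjacent if they share an edge. -/
def CellAdj (a b : ℤ × ℤ) : Prop :=
  (a.1 = b.1 ∧ (a.2 = b.2 + 1 ∨ b.2 = a.2 + 1)) ∨
  (a.2 = b.2 ∧ (a.1 = b.1 + 1 ∨ b.1 = a.1 + 1))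

/-- `P` is an L-convex polyomino: it is row convex, column convex, and any two of
its cells are joined by a path of distinct cells of `P` with at most one change of
direction. Cells are recorded as `(row, column)`. -/
def IsLConvex (P : Finset (ℤ × ℤ)) : Prop :=
  (∀ i j j' j'' : ℤ, (i, j) ∈ P → (i, j'') ∈ P → j ≤ j' → j' ≤ j'' → (i, j') ∈ P) ∧
  (∀ i i' i'' j : ℤ, (i, j) ∈ P → (i'', j) ∈ P → i ≤ i' → i' ≤ i'' → (i', j) ∈ P) ∧
  (∀ a ∈ P, ∀ b ∈ P, ∃ (k : ℕ) (c : ℕ → ℤ × ℤ),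
    c 0 = a ∧ c k = b ∧ (∀ i ≤ k, c i ∈ P) ∧
    (∀ i < k, CellAdj (c i) (c (i + 1))) ∧
    (∀ i j, i ≤ k → j ≤ k → c i = c j → i = j) ∧
    ((Finset.Ioo 0 k).filter (fun i =>
      (c (i - 1)).1 ≠ (c (i + 1)).1 ∧ (c (i - 1)).2 ≠ (c (i + 1)).2)).card ≤ 1)

/-- Number of cells of `P` in row `i`. -/
def rowCount (P : Finset (ℤ × ℤ)) (i : ℤ) : ℕ := (P.filter (fun c => c.1 = i)).card

/-- Number of cells of `P` in column `j`. -/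
def colCount (P : Finset (ℤ × ℤ)) (j : ℤ) : ℕ := (P.filter (fun c => c.2 = j)).card

lemma lpath_step_type {a b : ℤ × ℤ} (h : CellAdj a b) :
    (a.1 = b.1 ∧ a.2 ≠ b.2) ∨ (a.2 = b.2 ∧ a.1 ≠ b.1) := by
  rcases h with ⟨h1, h2⟩ | ⟨h1, h2⟩
  · exact Or.inl ⟨h1, by omega⟩
  · exact Or.inr ⟨h1, by omega⟩

lemma lpath_segment (c : ℕ → ℤ × ℤ) (k l r : ℕ)
    (adj : ∀ i < k, CellAdj (c i) (c (i + 1)))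
    (hlr : l ≤ r) (hrk : r ≤ k)
    (noturn : ∀ s, l < s → s < r →
      ¬((c (s - 1)).1 ≠ (c (s + 1)).1 ∧ (c (s - 1)).2 ≠ (c (s + 1)).2)) :
    (∀ i, l ≤ i → i ≤ r → (c i).1 = (c l).1) ∨
    (∀ i, l ≤ i → i ≤ r → (c i).2 = (c l).2) := by
  rcases eq_or_lt_of_le hlr with rfl | hlt
  · left; intro i h1 h2; have : i = l := le_antisymm h2 h1; rw [this]
  have key : ∀ s, l ≤ s → s < r →
      ((c s).1 = (c (s + 1)).1 ↔ (c l).1 = (c (l + 1)).1) := by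
    intro s hs
    induction s, hs using Nat.le_induction with
    | base => intro _; rfl
    | succ s hs ih =>
      intro hsr
      have hsr' : s < r := by omega
      have ih' := ih hsr'
      have nt := noturn (s + 1) (by omega) hsr
      simp only [Nat.add_sub_cancel] at nt
      have st1 := lpath_step_type (adj s (by omega))
      have st2 := lpath_step_type (adj (s + 1) (by omega))
      rw [← ih']
      rcases st1 with ⟨a1, a2⟩ | ⟨a1, a2⟩ <;> rcases st2 with ⟨b1, b2⟩ | ⟨b1, b2⟩
      · exact iff_of_true b1 a1
      · exact absurd ⟨by omega, by omega⟩ nt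
      · exact absurd ⟨by omega, by omega⟩ nt
      · exact iff_of_false b2 a2
  by_cases h1 : (c l).1 = (c (l + 1)).1
  · left
    intro i hi
    induction i, hi using Nat.le_induction with
    | base => intro _; rfl
    | succ i hi ih =>
      intro hir
      have hir' : i < r := by omega
      have := (key i hi hir').mpr h1
      rw [← this]; exact ih (by omega)
  · right
    intro i hi
    induction i, hi using Nat.le_induction with
    | base => intro _; rfl
    | succ i hi ih =>
      intro hir
      have hir' : i < r := by omega
      have hni : ¬ (c i).1 = (c (i + 1)).1 := fun h => h1 ((key i hi hir').mp h)
      rcases lpath_step_type (adj i (by omega)) with ⟨x1, _⟩ | ⟨x1, _⟩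
      · exact absurd x1 hni
      · rw [← x1]; exact ih (by omega)

lemma lpath_cross {P : Finset (ℤ × ℤ)} (hP : IsLConvex P) {a b : ℤ × ℤ}
    (ha : a ∈ P) (hb : b ∈ P) : (a.1, b.2) ∈ P ∨ (b.1, a.2) ∈ P := by
  obtain ⟨k, c, h0, hk, hmem, hadj, _, hcard⟩ := hP.2.2 a ha b hb
  set T := ((Finset.Ioo 0 k).filter (fun i =>
      (c (i - 1)).1 ≠ (c (i + 1)).1 ∧ (c (i - 1)).2 ≠ (c (i + 1)).2)) with hT
  rcases Finset.eq_empty_or_nonempty T with hTe | ⟨t, htT⟩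
  · -- no turns at all: the path is straight
    have noturn : ∀ s, 0 < s → s < k →
        ¬((c (s - 1)).1 ≠ (c (s + 1)).1 ∧ (c (s - 1)).2 ≠ (c (s + 1)).2) := by
      intro s hs1 hs2 hcond
      have : s ∈ T := by
        rw [hT, Finset.mem_filter, Finset.mem_Ioo]; exact ⟨⟨hs1, hs2⟩, hcond⟩
      rw [hTe] at this; exact absurd this (Finset.notMem_empty s)
    rcases lpath_segment c k 0 k hadj (Nat.zero_le k) le_rfl noturn with hc | hc
    · right
      have : b.1 = a.1 := by rw [← h0, ← hk]; exact hc k (Nat.zero_le k) le_rfl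
      rw [this]; simpa using ha
    · left
      have : b.2 = a.2 := by rw [← h0, ← hk]; exact hc k (Nat.zero_le k) le_rfl
      rw [this]; simpa using ha
  · have htmem := htT
    rw [hT, Finset.mem_filter, Finset.mem_Ioo] at htmem
    obtain ⟨⟨ht0, htk⟩, hturn⟩ := htmem
    have huniq : ∀ s ∈ T, s = t := fun s hs =>
      Finset.card_le_one.mp hcard s hs t htT
    have noturn1 : ∀ s, 0 < s → s < t →
        ¬((c (s - 1)).1 ≠ (c (s + 1)).1 ∧ (c (s - 1)).2 ≠ (c (s + 1)).2) := by
      intro s hs1 hs2 hcond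
      have : s ∈ T := by
        rw [hT, Finset.mem_filter, Finset.mem_Ioo]
        exact ⟨⟨hs1, by omega⟩, hcond⟩
      have := huniq s this; omega
    have noturn2 : ∀ s, t < s → s < k →
        ¬((c (s - 1)).1 ≠ (c (s + 1)).1 ∧ (c (s - 1)).2 ≠ (c (s + 1)).2) := by
      intro s hs1 hs2 hcond
      have : s ∈ T := by
        rw [hT, Finset.mem_filter, Finset.mem_Ioo]
        exact ⟨⟨by omega, hs2⟩, hcond⟩
      have := huniq s this; omega
    have seg1 := lpath_segment c k 0 t hadj (Nat.zero_le t) (le_of_lt htk) noturn1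
    have seg2 := lpath_segment c k t k hadj (le_of_lt htk) le_rfl noturn2
    have hct : c t ∈ P := hmem t (le_of_lt htk)
    rcases seg1 with s1 | s1
    · -- first segment horizontal: (c t).1 = a.1 and (c (t-1)).1 = a.1
      have e1 : (c t).1 = (c 0).1 := s1 t (Nat.zero_le t) le_rfl
      have e2 : (c (t - 1)).1 = (c 0).1 := s1 (t - 1) (Nat.zero_le _) (by omega)
      rcases seg2 with s2 | s2
      · exfalso
        have e3 : (c (t + 1)).1 = (c t).1 := s2 (t + 1) (by omega) (by omega)
        exact hturn.1 (by omega)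
      · left
        have e3 : (c k).2 = (c t).2 := s2 k (le_of_lt htk) le_rfl
        have : (a.1, b.2) = c t := by
          rw [← h0, ← hk]
          exact Prod.ext (by omega) (by omega)
        rwa [this]
    · have e1 : (c t).2 = (c 0).2 := s1 t (Nat.zero_le t) le_rfl
      have e2 : (c (t - 1)).2 = (c 0).2 := s1 (t - 1) (Nat.zero_le _) (by omega)
      rcases seg2 with s2 | s2
      · right
        have e3 : (c k).1 = (c t).1 := s2 k (le_of_lt htk) le_rfl
        have : (b.1, a.2) = c t := by
          rw [← h0, ← hk]
          exact Prod.ext (by omega) (by omega)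
        rwa [this]
      · exfalso
        have e3 : (c (t + 1)).2 = (c t).2 := s2 (t + 1) (by omega) (by omega)
        exact hturn.2 (by omega)

lemma colCount_eq_image (P : Finset (ℤ × ℤ)) (j : ℤ) :
    ((P.filter (fun c => c.2 = j)).image Prod.fst).card = colCount P j := by
  rw [colCount]
  apply Finset.card_image_of_injOn
  intro x hx y hy hxy
  simp only [Finset.coe_filter, Set.mem_setOf_eq] at hx hy
  exact Prod.ext hxy (hx.2.trans hy.2.symm)

lemma rowCount_eq_image (P : Finset (ℤ × ℤ)) (i : ℤ) :
    ((P.filter (fun c => c.1 = i)).image Prod.snd).card = rowCount P i := by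
  rw [rowCount]
  apply Finset.card_image_of_injOn
  intro x hx y hy hxy
  simp only [Finset.coe_filter, Set.mem_setOf_eq] at hx hy
  exact Prod.ext (hx.2.trans hy.2.symm) hxy

/-- In an L-convex polyomino: if columns `j, j'` of `P` satisfy `v_j ≤ v_{j'}`,
then every row containing a cell of column `j` also contains a cell of column `j'`;
and the analogous statement for rows. -/
theorem stmt7 (P : Finset (ℤ × ℤ)) (hP : IsLConvex P) :
    (∀ j j' : ℤ, 0 < colCount P j → 0 < colCount P j' →
      colCount P j ≤ colCount P j' → ∀ i : ℤ, (i, j) ∈ P → (i, j') ∈ P) ∧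
    (∀ i i' : ℤ, 0 < rowCount P i → 0 < rowCount P i' →
      rowCount P i ≤ rowCount P i' → ∀ j : ℤ, (i, j) ∈ P → (i', j) ∈ P) := by
  constructor
  · intro j j' _ _ hle i hij
    by_contra h0
    have hsub : (P.filter (fun c => c.2 = j')).image Prod.fst ⊆
        (P.filter (fun c => c.2 = j)).image Prod.fst := by
      intro r hr
      simp only [Finset.mem_image, Finset.mem_filter] at hr ⊢
      obtain ⟨⟨r', s⟩, ⟨hmem, hs⟩, hr1⟩ := hr
      simp only at hs hr1
      subst hs hr1
      rcases lpath_cross hP hij hmem with h | h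
      · exact absurd h h0
      · exact ⟨(r', j), ⟨h, rfl⟩, rfl⟩
    have hset := Finset.eq_of_subset_of_card_le hsub
      (by rw [colCount_eq_image, colCount_eq_image]; exact hle)
    have hi : i ∈ (P.filter (fun c => c.2 = j)).image Prod.fst := by
      simp only [Finset.mem_image, Finset.mem_filter]
      exact ⟨(i, j), ⟨hij, rfl⟩, rfl⟩
    rw [← hset] at hi
    simp only [Finset.mem_image, Finset.mem_filter] at hi
    obtain ⟨⟨r', s⟩, ⟨hmem, hs⟩, hr1⟩ := hi
    simp only at hs hr1
    subst hs hr1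
    exact h0 hmem
  · intro i i' _ _ hle j hij
    by_contra h0
    have hsub : (P.filter (fun c => c.1 = i')).image Prod.snd ⊆
        (P.filter (fun c => c.1 = i)).image Prod.snd := by
      intro s hs
      simp only [Finset.mem_image, Finset.mem_filter] at hs ⊢
      obtain ⟨⟨r', s'⟩, ⟨hmem, hr⟩, hs1⟩ := hs
      simp only at hr hs1
      subst hr hs1
      rcases lpath_cross hP hij hmem with h | h
      · exact ⟨(i, s'), ⟨h, rfl⟩, rfl⟩
      · exact absurd h h0
    have hset := Finset.eq_of_subset_of_card_le hsub
      (by rw [rowCount_eq_image, rowCount_eq_image]; exact hle)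
    have hj : j ∈ (P.filter (fun c => c.1 = i)).image Prod.snd := by
      simp only [Finset.mem_image, Finset.mem_filter]
      exact ⟨(i, j), ⟨hij, rfl⟩, rfl⟩
    rw [← hset] at hj
    simp only [Finset.mem_image, Finset.mem_filter] at hj
    obtain ⟨⟨r', s'⟩, ⟨hr, hs1⟩, h⟩ := hj
    simp only at hs1 h
    subst hs1 h
    exact h0 hr
end

section
/- Let P be an L-convex polyomino whose sorted (decreasing) row lengths are h_1 ≥ ... ≥ h_n and sorted (decreasing) column lengths are v_1 ≥ ... ≥ v_m. Then min{ n, min_{1 ≤ j ≤ n}(h_j + j - 1) } = min{ m, min_{1 ≤ j ≤ m}(v_j + j - 1) }, both being equal to the maximal number of non-attacking rooks placeable on P. -/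
/-- The multiset of row lengths of `P` (one entry per occupied row). -/
def rowMultiset (P : Finset (ℤ × ℤ)) : Multiset ℕ :=
  (P.image Prod.fst).val.map (rowCount P)

/-- The multiset of column lengths of `P` (one entry per occupied column). -/
def colMultiset (P : Finset (ℤ × ℤ)) : Multiset ℕ :=
  (P.image Prod.snd).val.map (colCount P)

/-- The Ferrer diagram (as a set of cells in `ℤ × ℤ`) with `n` left-justified
rows, row `i` (0-based) having `h i` cells. -/
def ferrerCellsZ (n : ℕ) (h : ℕ → ℕ) : Finset (ℤ × ℤ) :=
  (Finset.range n).biUnion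
    (fun i => (Finset.range (h i)).image (fun (j : ℕ) => ((i : ℤ), (j : ℤ))))

/-- Placements of `k` non-attacking rooks on the cell set `P`. -/
def rookPlacements {α β : Type*} [DecidableEq α] [DecidableEq β]
    (P : Finset (α × β)) (r : ℕ) : Finset (Finset (α × β)) :=
  P.powerset.filter (fun R => R.card = r ∧
    ∀ a ∈ R, ∀ b ∈ R, a ≠ b → a.1 ≠ b.1 ∧ a.2 ≠ b.2)

/-!
An L-convex polyomino is corner closed: for cells `a`, `b`, one of `(a.1, b.2)`, `(b.1, a.2)` is a
cell, namely the turning cell of a path from `a` to `b` with at most one turn. Hence the column sets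
of the rows form a chain; listing the rows by decreasing length `h 0 ≥ h 1 ≥ ⋯`, row `j` meets every
column met by a later row. A rook placement thus has at most `j` rooks in the first `j` rows and at
most `h j` in the others, and at most `n` in all; conversely, Hall's theorem places
`min n (min_j (h j + j))` rooks in distinct rows and columns. Transposing gives the column formula.
-/

open Finset

section CornerClosed

variable {α β : Type*}

def IsCornerClosed (P : Finset (α × β)) : Prop :=
  ∀ a ∈ P, ∀ b ∈ P, (a.1, b.2) ∈ P ∨ (b.1, a.2) ∈ P

lemma corner_mem_of_aligned {P : Finset (α × β)} {a b x : α × β} (ha : a ∈ P) (hb : b ∈ P)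
    (hx : x ∈ P) (hxa : x.1 = a.1 ∨ x.2 = a.2) (hxb : x.1 = b.1 ∨ x.2 = b.2) :
    (a.1, b.2) ∈ P ∨ (b.1, a.2) ∈ P := by
  obtain ⟨a1, a2⟩ := a
  obtain ⟨b1, b2⟩ := b
  obtain ⟨x1, x2⟩ := x
  dsimp only at *
  rcases hxa with rfl | rfl <;> rcases hxb with rfl | rfl <;> simp_all

lemma IsCornerClosed.image_swap [DecidableEq α] [DecidableEq β] {P : Finset (α × β)}
    (hP : IsCornerClosed P) : IsCornerClosed (P.image Prod.swap) := by
  intro a ha b hb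
  obtain ⟨a', ha', rfl⟩ := mem_image.1 ha
  obtain ⟨b', hb', rfl⟩ := mem_image.1 hb
  exact (hP b' hb' a' ha').imp (mem_image_of_mem Prod.swap) (mem_image_of_mem Prod.swap)

end CornerClosed

lemma CellAdj.fst_eq_iff_of_not_turn {x y z : ℤ × ℤ} (hxy : CellAdj x y) (hyz : CellAdj y z)
    (hturn : ¬(x.1 ≠ z.1 ∧ x.2 ≠ z.2)) : x.1 = y.1 ↔ y.1 = z.1 := by
  unfold CellAdj at hxy hyz
  omega

lemma CellAdj.snd_eq_iff_of_not_turn {x y z : ℤ × ℤ} (hxy : CellAdj x y) (hyz : CellAdj y z)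
    (hturn : ¬(x.1 ≠ z.1 ∧ x.2 ≠ z.2)) : x.2 = y.2 ↔ y.2 = z.2 := by
  unfold CellAdj at hxy hyz
  omega

lemma fst_const_or_snd_const_of_no_turn (c : ℕ → ℤ × ℤ) {s t : ℕ} (hst : s ≤ t)
    (hadj : ∀ i, s ≤ i → i < t → CellAdj (c i) (c (i + 1)))
    (hturn : ∀ i, s < i → i < t →
      ¬((c (i - 1)).1 ≠ (c (i + 1)).1 ∧ (c (i - 1)).2 ≠ (c (i + 1)).2)) :
    (∀ i, s ≤ i → i ≤ t → (c i).1 = (c s).1) ∨ (∀ i, s ≤ i → i ≤ t → (c i).2 = (c s).2) := by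
  induction t, hst using Nat.le_induction with
  | base => exact Or.inl fun i h1 h2 => by rw [le_antisymm h2 h1]
  | succ t hst ih =>
    have extend : ∀ f : ℤ × ℤ → ℤ, (∀ i, s ≤ i → i ≤ t → f (c i) = f (c s)) →
        f (c (t + 1)) = f (c t) → ∀ i, s ≤ i → i ≤ t + 1 → f (c i) = f (c s) := by
      intro f hf hstep i hsi hit
      rcases Nat.le_succ_iff.1 hit with hit | rfl
      · exact hf i hsi hit
      · rw [hstep, hf t hst le_rfl]
    have hstep := hadj t hst (by omega)
    rcases hst.eq_or_lt with rfl | hst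
    · unfold CellAdj at hstep
      exact hstep.imp (fun h => extend Prod.fst (fun i h1 h2 => by rw [le_antisymm h2 h1]) h.1.symm)
        (fun h => extend Prod.snd (fun i h1 h2 => by rw [le_antisymm h2 h1]) h.1.symm)
    have hprev : CellAdj (c (t - 1)) (c t) := by
      simpa [Nat.sub_add_cancel (by omega : 1 ≤ t)] using hadj (t - 1) (by omega) (by omega)
    have hcorner := hturn t hst (by omega)
    have hprev' := ih (fun i h1 h2 => hadj i h1 (by omega)) (fun i h1 h2 => hturn i h1 (by omega))
    refine hprev'.imp (fun hf => extend Prod.fst hf ?_) (fun hf => extend Prod.snd hf ?_)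
    · exact ((hprev.fst_eq_iff_of_not_turn hstep hcorner).1
        ((hf _ (by omega) (by omega)).trans (hf t (by omega) le_rfl).symm)).symm
    · exact ((hprev.snd_eq_iff_of_not_turn hstep hcorner).1
        ((hf _ (by omega) (by omega)).trans (hf t (by omega) le_rfl).symm)).symm

lemma IsLConvex.isCornerClosed {P : Finset (ℤ × ℤ)} (hP : IsLConvex P) : IsCornerClosed P := by
  intro a ha b hb
  obtain ⟨k, c, rfl, rfl, hmem, hadj, -, hturns⟩ := hP.2.2 _ ha _ hb
  obtain ⟨t₀, ht₀⟩ := card_le_one_iff_subset_singleton.1 hturns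
  have hturn : ∀ i, 0 < i → i < k → (c (i - 1)).1 ≠ (c (i + 1)).1 ∧
      (c (i - 1)).2 ≠ (c (i + 1)).2 → i = t₀ := fun i h0 hk hi =>
    mem_singleton.1 (ht₀ (mem_filter.2 ⟨mem_Ioo.2 ⟨h0, hk⟩, hi⟩))
  -- the only turn, if any, is at `t₀`: both halves of the path around `min t₀ k` are straight
  have hbefore := fst_const_or_snd_const_of_no_turn c (Nat.zero_le (min t₀ k))
    (fun i _ hi => hadj i (by omega)) fun i h0 hi hti => by have := hturn i h0 (by omega) hti; omega
  have hafter := fst_const_or_snd_const_of_no_turn c (min_le_right t₀ k)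
    (fun i _ hi => hadj i hi) fun i hi hk hti => by have := hturn i (by omega) hk hti; omega
  exact corner_mem_of_aligned ha hb (hmem _ (min_le_right t₀ k))
    (hbefore.imp (· _ (by omega) le_rfl) (· _ (by omega) le_rfl))
    (hafter.imp (fun hf => (hf k (by omega) le_rfl).symm) (fun hf => (hf k (by omega) le_rfl).symm))

lemma exists_bijOn_of_map_eq {α γ : Type*} [Inhabited α] {s : Finset α} {f : α → γ} {n : ℕ}
    {h : ℕ → γ} (hs : s.val.map f = (range n).val.map h) :
    ∃ e : ℕ → α, Set.BijOn e (Set.Iio n) s ∧ ∀ j < n, f (e j) = h j := by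
  have hperm : ((List.range n).map h).Perm (s.toList.map f) := by
    rw [← Multiset.coe_eq_coe, ← Multiset.map_coe, ← Multiset.map_coe, coe_toList]
    exact hs.symm
  obtain ⟨l, hl, hls⟩ : ∃ l : List α, (List.range n).map h = l.map f ∧ l.Perm s.toList :=
    (congrFun₂ (List.eq_map_comp_perm f) _ _).mpr hperm
  have hlen : l.length = n := by simpa using (congrArg List.length hl).symm
  have hnodup : l.Nodup := hls.nodup_iff.2 s.nodup_toList
  have he : ∀ j (hj : j < n), l.getD j default = l[j] := fun j hj => List.getD_eq_getElem _ _ _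
  refine ⟨fun j => l.getD j default, ⟨fun j hj => ?_, fun i hi j hj hij => ?_, fun a ha => ?_⟩,
    fun j hj => ?_⟩
  · rw [Set.mem_Iio] at hj
    simp only [mem_coe, he j hj]
    rw [← mem_toList, ← hls.mem_iff]
    exact List.getElem_mem _
  · rw [Set.mem_Iio] at hi hj
    simp only [he i hi, he j hj] at hij
    exact (hnodup.getElem_inj_iff).1 hij
  · obtain ⟨j, hj, rfl⟩ := List.getElem_of_mem (hls.mem_iff.2 (mem_toList.2 ha))
    exact ⟨j, by simpa [hlen] using hj, he j (hlen ▸ hj)⟩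
  · have := List.getElem_of_eq hl (by simpa using hj)
    simp only [List.getElem_map, List.getElem_range] at this
    simp only [he j hj, this]

section Rooks

variable {α β : Type*} [DecidableEq α] [DecidableEq β]

def rowSet (P : Finset (α × β)) (a : α) : Finset β :=
  (P.filter (·.1 = a)).image Prod.snd

@[simp]
lemma mem_rowSet {P : Finset (α × β)} {a : α} {b : β} : b ∈ rowSet P a ↔ (a, b) ∈ P := by
  simp [rowSet]

lemma IsCornerClosed.rowSet_subset_or_subset {P : Finset (α × β)} (hP : IsCornerClosed P)
    (a a' : α) : rowSet P a ⊆ rowSet P a' ∨ rowSet P a' ⊆ rowSet P a := by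
  refine or_iff_not_imp_left.2 fun hsub b hb => ?_
  obtain ⟨b', hb', hb'a'⟩ := not_subset.1 hsub
  rw [mem_rowSet] at *
  exact (hP _ hb' _ hb).resolve_right hb'a'

lemma IsCornerClosed.rowSet_subset_of_card_le {P : Finset (α × β)} (hP : IsCornerClosed P)
    {a a' : α} (hcard : #(rowSet P a) ≤ #(rowSet P a')) : rowSet P a ⊆ rowSet P a' :=
  (hP.rowSet_subset_or_subset a a').elim id fun hsub => (eq_of_subset_of_card_le hsub hcard).ge

lemma mem_rookPlacements {P R : Finset (α × β)} {r : ℕ} :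
    R ∈ rookPlacements P r ↔
      R ⊆ P ∧ #R = r ∧ ∀ a ∈ R, ∀ b ∈ R, a ≠ b → a.1 ≠ b.1 ∧ a.2 ≠ b.2 := by
  simp [rookPlacements]

lemma le_card_add_card_of_mem_rookPlacements {P R : Finset (α × β)} {r : ℕ}
    (hR : R ∈ rookPlacements P r) (T : Finset α) :
    r ≤ #T + #((P.filter (·.1 ∉ T)).image Prod.snd) := by
  obtain ⟨hRP, rfl, hrook⟩ := mem_rookPlacements.1 hR
  have hfst : Set.InjOn Prod.fst (R : Set (α × β)) := fun a ha b hb hab =>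
    by_contra fun hne => (hrook a ha b hb hne).1 hab
  have hsnd : Set.InjOn Prod.snd (R : Set (α × β)) := fun a ha b hb hab =>
    by_contra fun hne => (hrook a ha b hb hne).2 hab
  rw [← card_filter_add_card_filter_not (·.1 ∈ T)]
  gcongr
  · rw [← card_image_of_injOn (hfst.mono (filter_subset _ _))]
    exact card_le_card fun x hx => by
      obtain ⟨a, ha, rfl⟩ := mem_image.1 hx
      exact (mem_filter.1 ha).2
  · rw [← card_image_of_injOn (hsnd.mono (filter_subset _ _))]
    exact card_le_card (image_subset_image (filter_subset_filter _ hRP))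

lemma le_card_image_fst_of_mem_rookPlacements {P R : Finset (α × β)} {r : ℕ}
    (hR : R ∈ rookPlacements P r) : r ≤ #(P.image Prod.fst) := by
  simpa [filter_eq_empty_iff.2 fun x hx => not_not.2 (mem_image_of_mem Prod.fst hx)] using
    le_card_add_card_of_mem_rookPlacements hR (P.image Prod.fst)

lemma le_add_card_rowSet_of_mem_rookPlacements {P R : Finset (α × β)} {r n : ℕ} {e : ℕ → α}
    (he : Set.SurjOn e (Set.Iio n) (P.image Prod.fst))
    (hanti : AntitoneOn (rowSet P ∘ e) (Set.Iio n)) (hR : R ∈ rookPlacements P r) {j : ℕ}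
    (hj : j < n) : r ≤ j + #(rowSet P (e j)) := by
  refine (le_card_add_card_of_mem_rookPlacements hR ((range j).image e)).trans
    (add_le_add (card_image_le.trans (card_range j).le) (card_le_card fun b hb => ?_))
  obtain ⟨x, hx, rfl⟩ := mem_image.1 hb
  obtain ⟨hxP, hxT⟩ := mem_filter.1 hx
  obtain ⟨t, ht, hte⟩ := he (mem_image_of_mem Prod.fst hxP)
  have hjt : j ≤ t := by
    by_contra! htj
    exact hxT (mem_image.2 ⟨t, mem_range.2 htj, hte⟩)
  exact hanti hj ht hjt (mem_rowSet.2 (by rw [hte]; exact hxP))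

/-- Hall's condition holds since a set `s` of indices has at most `N - s.min'` elements while the
row of `s.min'` alone meets that many columns. -/
lemma rookPlacements_nonempty {P : Finset (α × β)} {N : ℕ} {e : ℕ → α}
    (he : Set.InjOn e (Set.Iio N))
    (hcard : ∀ j < N, N ≤ j + #(rowSet P (e j))) : (rookPlacements P N).Nonempty := by
  obtain ⟨c, hc, hcmem⟩ := (all_card_le_biUnion_card_iff_exists_injective
    fun j : Fin N => rowSet P (e j)).1 fun s => by
      rcases s.eq_empty_or_nonempty with rfl | hs
      · simp
      have hmin := hcard _ (s.min' hs).isLt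
      calc #s ≤ #(Ici (s.min' hs)) := card_le_card fun j hj => mem_Ici.2 (s.min'_le j hj)
        _ ≤ #(rowSet P (e (s.min' hs))) := by rw [Fin.card_Ici]; omega
        _ ≤ #(s.biUnion fun j => rowSet P (e j)) :=
          card_le_card (subset_biUnion_of_mem (fun j : Fin N => rowSet P (e j)) (s.min'_mem hs))
  have hinj : Function.Injective fun j : Fin N => (e j, c j) := fun i j hij =>
    hc (Prod.ext_iff.1 hij).2
  refine ⟨univ.image fun j : Fin N => (e j, c j), mem_rookPlacements.2 ⟨?_, ?_, ?_⟩⟩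
  · simpa [subset_iff] using hcmem
  · simp [card_image_of_injective _ hinj]
  · simp only [mem_image, mem_univ, true_and]
    rintro _ ⟨i, rfl⟩ _ ⟨j, rfl⟩ hij
    have hij : i ≠ j := fun h => hij (h ▸ rfl)
    exact ⟨fun h => hij (Fin.ext (he i.isLt j.isLt h)), hc.ne hij⟩

lemma image_swap_mem_rookPlacements {P R : Finset (α × β)} {r : ℕ}
    (hR : R ∈ rookPlacements P r) : R.image Prod.swap ∈ rookPlacements (P.image Prod.swap) r := by
  obtain ⟨hRP, rfl, hrook⟩ := mem_rookPlacements.1 hR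
  refine mem_rookPlacements.2 ⟨image_subset_image hRP,
    card_image_of_injective _ Prod.swap_injective, ?_⟩
  simp only [mem_image]
  rintro _ ⟨a, ha, rfl⟩ _ ⟨b, hb, rfl⟩ hab
  exact (hrook a ha b hb (fun h => hab (h ▸ rfl))).symm

lemma rookPlacements_image_swap_nonempty_iff {P : Finset (α × β)} {r : ℕ} :
    (rookPlacements (P.image Prod.swap) r).Nonempty ↔ (rookPlacements P r).Nonempty := by
  refine ⟨fun ⟨R, hR⟩ => ⟨R.image Prod.swap, ?_⟩,
    fun ⟨R, hR⟩ => ⟨_, image_swap_mem_rookPlacements hR⟩⟩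
  simpa [image_image, Prod.swap_swap_eq] using image_swap_mem_rookPlacements hR

end Rooks

lemma card_rowSet (P : Finset (ℤ × ℤ)) (i : ℤ) : #(rowSet P i) = rowCount P i :=
  card_image_of_injOn fun _ hx _ hy hxy =>
    Prod.ext ((mem_filter.1 hx).2.trans (mem_filter.1 hy).2.symm) hxy

lemma rowMultiset_image_swap (P : Finset (ℤ × ℤ)) :
    rowMultiset (P.image Prod.swap) = colMultiset P := by
  have hrowCount (j : ℤ) : rowCount (P.image Prod.swap) j = colCount P j := by
    rw [rowCount, colCount, filter_image]
    exact card_image_of_injective _ Prod.swap_injective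
  simp only [rowMultiset, colMultiset, image_image]
  exact Multiset.map_congr rfl fun j _ => hrowCount j

theorem IsCornerClosed.isGreatest_rookPlacements {P : Finset (ℤ × ℤ)} (hP : IsCornerClosed P)
    {n : ℕ} (hn : 0 < n) {h : ℕ → ℕ} (hdec : AntitoneOn h (Set.Iio n))
    (hrows : rowMultiset P = (range n).val.map h) :
    IsGreatest {k | (rookPlacements P k).Nonempty}
      (min n ((range n).inf' (nonempty_range_iff.mpr hn.ne') fun j => h j + j)) := by
  obtain ⟨e, he, hcount⟩ := exists_bijOn_of_map_eq hrows
  have hcard : ∀ j < n, #(rowSet P (e j)) = h j := fun j hj =>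
    (card_rowSet P (e j)).trans (hcount j hj)
  have hanti : AntitoneOn (rowSet P ∘ e) (Set.Iio n) := fun i hi j hj hij =>
    hP.rowSet_subset_of_card_le (by rw [hcard j hj, hcard i hi]; exact hdec hi hj hij)
  have hnrows : #(P.image Prod.fst) = n := by
    simpa only [rowMultiset, Multiset.card_map, card_val, card_range] using
      congrArg Multiset.card hrows
  refine ⟨rookPlacements_nonempty (he.injOn.mono fun j hj => ?_) fun j hj => ?_,
    fun k ⟨R, hR⟩ => le_min ?_ (le_inf' _ _ fun j hj => ?_)⟩
  · exact (show j < _ from hj).trans_le (min_le_left _ _)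
  · have hjn : j < n := hj.trans_le (min_le_left _ _)
    rw [hcard j hjn, add_comm]
    exact (min_le_right _ _).trans (inf'_le _ (mem_range.2 hjn))
  · exact hnrows ▸ le_card_image_fst_of_mem_rookPlacements hR
  · rw [add_comm, ← hcard j (mem_range.1 hj)]
    exact le_add_card_rowSet_of_mem_rookPlacements he.surjOn hanti hR (mem_range.1 hj)

theorem stmt11_general (P : Finset (ℤ × ℤ)) (hP : IsLConvex P)
    (n m : ℕ) (hn : 0 < n) (hm : 0 < m) (h v : ℕ → ℕ)
    (hdec : ∀ i j : ℕ, i ≤ j → j < n → h j ≤ h i)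
    (vdec : ∀ i j : ℕ, i ≤ j → j < m → v j ≤ v i)
    (hrows : rowMultiset P = (Finset.range n).val.map h)
    (hcols : colMultiset P = (Finset.range m).val.map v) :
    min n ((Finset.range n).inf' (Finset.nonempty_range_iff.mpr hn.ne')
        (fun j => h j + j)) =
      min m ((Finset.range m).inf' (Finset.nonempty_range_iff.mpr hm.ne')
        (fun j => v j + j)) ∧
    IsGreatest {k | (rookPlacements P k).Nonempty}
      (min n ((Finset.range n).inf' (Finset.nonempty_range_iff.mpr hn.ne')
        (fun j => h j + j))) := by
  have hrook := hP.isCornerClosed.isGreatest_rookPlacements hn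
    (fun i _ j hj hij => hdec i j hij hj) hrows
  have hrook' := hP.isCornerClosed.image_swap.isGreatest_rookPlacements hm
    (fun i _ j hj hij => vdec i j hij hj) (hcols ▸ rowMultiset_image_swap P)
  simp only [rookPlacements_image_swap_nonempty_iff] at hrook'
  exact ⟨hrook.unique hrook', hrook⟩

/-- Let `P` be an L-convex polyomino with sorted (weakly decreasing) row lengths
`h 0 ≥ … ≥ h (n-1)` and sorted column lengths `v 0 ≥ … ≥ v (m-1)`. Then
`min { n, min_{j<n} (h j + j) } = min { m, min_{j<m} (v j + j) }` (0-based version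
of `h_j + j - 1`), both being the maximal number of non-attacking rooks on `P`. -/
theorem stmt11 (P : Finset (ℤ × ℤ)) (hne : P.Nonempty) (hP : IsLConvex P)
    (n m : ℕ) (hn : 0 < n) (hm : 0 < m) (h v : ℕ → ℕ)
    (hdec : ∀ i j : ℕ, i ≤ j → j < n → h j ≤ h i) (hpos : ∀ i, i < n → 0 < h i)
    (vdec : ∀ i j : ℕ, i ≤ j → j < m → v j ≤ v i) (vpos : ∀ i, i < m → 0 < v i)
    (hrows : rowMultiset P = (Finset.range n).val.map h)
    (hcols : colMultiset P = (Finset.range m).val.map v) :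
    min n ((Finset.range n).inf' (Finset.nonempty_range_iff.mpr hn.ne')
        (fun j => h j + j)) =
      min m ((Finset.range m).inf' (Finset.nonempty_range_iff.mpr hm.ne')
        (fun j => v j + j)) ∧
    IsGreatest {k | (rookPlacements P k).Nonempty}
      (min n ((Finset.range n).inf' (Finset.nonempty_range_iff.mpr hn.ne')
        (fun j => h j + j))) :=
  stmt11_general P hP n m hn hm h v hdec vdec hrows hcols
end
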